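/- Let n be a positive integer and let σ₀, ω₀, π be permutations of Fin n. Define the map f on Fin n ⊕ Fin n by f(inl i) = inr(π(σ₀(i))) and f(inr j) = inl(π⁻¹(ω₀(j))), and define the permutation g of Fin n by g(i) = π⁻¹(ω₀(π(σ₀(i)))). Then f is a permutation of Fin n ⊕ Fin n, the number of orbits of (the cyclic group generated by) f acting on Fin n ⊕ Fin n equals the number of orbits of g acting on Fin n, and for every i ∈ Fin n the orbit of inl i under f has cardinality exactly twice the cardinality of the orbit of i under g. -/

import Mathlib

/-- The number of cycles of a permutation, counting fixed points as cycles of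
length 1: the number of orbits of the cyclic group generated by the permutation. -/
noncomputable def cycleCount {α : Type*} [Fintype α] (τ : Equiv.Perm α) : ℕ :=
  Nat.card (MulAction.orbitRel.Quotient (Subgroup.zpowers τ) α)

/-- The cycle type of a permutation, including one part equal to 1 for each
fixed point. -/
def fullCycleType {n : ℕ} (τ : Equiv.Perm (Fin n)) : Multiset ℕ :=
  τ.cycleType + Multiset.replicate (Finset.univ.filter fun x => τ x = x).card 1

/-- The conjugacy class of permutations of `Fin n` with cycle type the
partition `μ`. -/
def conjClass {n : ℕ} (μ : n.Partition) : Finset (Equiv.Perm (Fin n)) :=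
  Finset.univ.filter fun σ => fullCycleType σ = μ.parts

private lemma intertwineAux {α β : Type*} (P : Equiv.Perm α) (q : Equiv.Perm β) (j : β → α)
    (h : ∀ i, P (j i) = j (q i)) : ∀ (k : ℤ) (i : β), (P ^ k) (j i) = j ((q ^ k) i) := by
  have hnat : ∀ (m : ℕ) (i : β), (P ^ m) (j i) = j ((q ^ m) i) := by
    intro m
    induction m with
    | zero => intro i; simp
    | succ m ih =>
      intro i
      rw [pow_succ', pow_succ', Equiv.Perm.mul_apply, Equiv.Perm.mul_apply, ih, h]
  intro k i
  cases k with
  | ofNat m => simpa using hnat m i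
  | negSucc m =>
    have key : ((P ^ (m + 1))⁻¹) (j i) = j (((q ^ (m + 1))⁻¹) i) := by
      apply (P ^ (m + 1)).injective
      rw [show ∀ x, (P ^ (m + 1)) ((P ^ (m + 1))⁻¹ x) = x from (P ^ (m + 1)).apply_symm_apply, hnat,
        show ∀ x, (q ^ (m + 1)) ((q ^ (m + 1))⁻¹ x) = x from (q ^ (m + 1)).apply_symm_apply]
    simpa [zpow_negSucc] using key

private lemma mem_orbit_zpowers_iff {α : Type*} (τ : Equiv.Perm α) (x y : α) :
    y ∈ MulAction.orbit (Subgroup.zpowers τ) x ↔ ∃ k : ℤ, (τ ^ k) x = y := by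
  constructor
  · rintro ⟨u, rfl⟩
    obtain ⟨k, hk⟩ := Subgroup.mem_zpowers_iff.mp u.2
    exact ⟨k, by show (τ ^ k) x = u • x; rw [Subgroup.smul_def, Equiv.Perm.smul_def, hk]⟩
  · rintro ⟨k, rfl⟩
    refine ⟨⟨τ ^ k, Subgroup.zpow_mem_zpowers τ k⟩, ?_⟩
    show (⟨τ ^ k, _⟩ : Subgroup.zpowers τ) • x = (τ ^ k) x
    rw [Subgroup.smul_def, Equiv.Perm.smul_def]

theorem stmt8 (n : ℕ) (hn : 0 < n) (σ₀ ω₀ π : Equiv.Perm (Fin n))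
    (f : Fin n ⊕ Fin n → Fin n ⊕ Fin n)
    (hf₁ : ∀ i : Fin n, f (Sum.inl i) = Sum.inr (π (σ₀ i)))
    (hf₂ : ∀ j : Fin n, f (Sum.inr j) = Sum.inl (π⁻¹ (ω₀ j)))
    (g : Equiv.Perm (Fin n))
    (hg : ∀ i : Fin n, g i = π⁻¹ (ω₀ (π (σ₀ i)))) :
    Function.Bijective f ∧
      ∀ F : Equiv.Perm (Fin n ⊕ Fin n), (∀ x, F x = f x) →
        cycleCount F = cycleCount g ∧
          ∀ i : Fin n,
            Nat.card (MulAction.orbit (Subgroup.zpowers F) (Sum.inl i : Fin n ⊕ Fin n)) =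
              2 * Nat.card (MulAction.orbit (Subgroup.zpowers g) i) := by
  constructor
  · constructor
    · intro x y hxy
      match x, y with
      | Sum.inl a, Sum.inl b =>
        rw [hf₁, hf₁] at hxy
        have := Sum.inr.inj hxy
        have := σ₀.injective (π.injective this)
        rw [this]
      | Sum.inl a, Sum.inr b => rw [hf₁, hf₂] at hxy; exact absurd hxy (by simp)
      | Sum.inr a, Sum.inl b => rw [hf₂, hf₁] at hxy; exact absurd hxy (by simp)
      | Sum.inr a, Sum.inr b =>
        rw [hf₂, hf₂] at hxy
        have := Sum.inl.inj hxy
        have := ω₀.injective (π⁻¹.injective this)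
        rw [this]
    · intro y
      match y with
      | Sum.inl j => exact ⟨Sum.inr (ω₀⁻¹ (π j)), by rw [hf₂]; simp⟩
      | Sum.inr j => exact ⟨Sum.inl (σ₀⁻¹ (π⁻¹ j)), by rw [hf₁]; simp⟩
  · intro F hF
    have hF1 : ∀ i, F (Sum.inl i) = Sum.inr (π (σ₀ i)) := fun i => (hF _).trans (hf₁ i)
    have hF2 : ∀ j, F (Sum.inr j) = Sum.inl (π⁻¹ (ω₀ j)) := fun j => (hF _).trans (hf₂ j)
    have hFsq : ∀ i, (F ^ 2) (Sum.inl i) = Sum.inl (g i) := by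
      intro i
      rw [pow_two, Equiv.Perm.mul_apply, hF1, hF2, hg]
    have heven : ∀ (k : ℤ) (i : Fin n), (F ^ (2 * k)) (Sum.inl i) = Sum.inl ((g ^ k) i) := by
      intro k i
      have h1 := intertwineAux (F ^ 2) g Sum.inl hFsq k i
      have h2 : F ^ (2 * k) = (F ^ 2) ^ k := by
        rw [← zpow_natCast F 2, ← zpow_mul]; norm_num
      rw [h2]
      exact h1
    have hodd : ∀ (k : ℤ) (i : Fin n),
        (F ^ (2 * k + 1)) (Sum.inl i) = Sum.inr (π (σ₀ ((g ^ k) i))) := by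
      intro k i
      have : F ^ (2 * k + 1) = F * F ^ (2 * k) := by
        rw [← zpow_one_add F (2 * k), add_comm]
      rw [this, Equiv.Perm.mul_apply, heven, hF1]
    -- orbit description
    have horb : ∀ i : Fin n, MulAction.orbit (Subgroup.zpowers F) (Sum.inl i : Fin n ⊕ Fin n) =
        Sum.inl '' (MulAction.orbit (Subgroup.zpowers g) i) ∪
        Sum.inr '' ((fun x => π (σ₀ x)) '' (MulAction.orbit (Subgroup.zpowers g) i)) := by
      intro i
      ext y
      rw [mem_orbit_zpowers_iff]
      constructor
      · rintro ⟨k, rfl⟩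
        rcases Int.even_or_odd k with ⟨m, hm⟩ | ⟨m, hm⟩
        · left
          rw [hm, ← two_mul, heven]
          exact ⟨(g ^ m) i, (mem_orbit_zpowers_iff g i _).mpr ⟨m, rfl⟩, rfl⟩
        · right
          rw [hm, hodd]
          exact ⟨π (σ₀ ((g ^ m) i)), ⟨(g ^ m) i, (mem_orbit_zpowers_iff g i _).mpr ⟨m, rfl⟩, rfl⟩, rfl⟩
      · rintro (⟨x, hx, rfl⟩ | ⟨x, ⟨z, hz, rfl⟩, rfl⟩)
        · obtain ⟨k, rfl⟩ := (mem_orbit_zpowers_iff g i x).mp hx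
          exact ⟨2 * k, heven k i⟩
        · obtain ⟨k, rfl⟩ := (mem_orbit_zpowers_iff g i z).mp hz
          exact ⟨2 * k + 1, hodd k i⟩
    constructor
    · -- cycleCount F = cycleCount g
      unfold cycleCount
      letI sg := MulAction.orbitRel (Subgroup.zpowers g) (Fin n)
      letI sF := MulAction.orbitRel (Subgroup.zpowers F) (Fin n ⊕ Fin n)
      refine (Nat.card_eq_of_bijective
        (Quotient.lift (fun i : Fin n =>
          (Quotient.mk sF (Sum.inl i) : MulAction.orbitRel.Quotient (Subgroup.zpowers F) (Fin n ⊕ Fin n)))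
          ?_) ?_).symm
      ·
        intro a b hab
        have hab' : a ∈ MulAction.orbit (Subgroup.zpowers g) b :=
          (MulAction.orbitRel_apply (G := Subgroup.zpowers g)).mp hab
        obtain ⟨k, rfl⟩ := (mem_orbit_zpowers_iff g b a).mp hab'
        apply Quotient.sound
        refine (MulAction.orbitRel_apply (G := Subgroup.zpowers F)).mpr ?_
        rw [mem_orbit_zpowers_iff]
        exact ⟨2 * k, heven k b⟩
      ·
        constructor
        · rintro ⟨a⟩ ⟨b⟩ hab
          have hab' : (Sum.inl a : Fin n ⊕ Fin n) ∈
              MulAction.orbit (Subgroup.zpowers F) (Sum.inl b) :=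
            (MulAction.orbitRel_apply (G := Subgroup.zpowers F)).mp (Quotient.exact hab)
          obtain ⟨k, hk⟩ := (mem_orbit_zpowers_iff F _ _).mp hab'
          apply Quotient.sound
          refine (MulAction.orbitRel_apply (G := Subgroup.zpowers g)).mpr ?_
          rw [mem_orbit_zpowers_iff]
          rcases Int.even_or_odd k with ⟨m, hm⟩ | ⟨m, hm⟩
          · rw [hm, ← two_mul, heven] at hk
            exact ⟨m, Sum.inl.inj hk⟩
          · rw [hm, hodd] at hk
            exact absurd hk (by simp)
        · rintro ⟨x⟩
          match x with
          | Sum.inl j => exact ⟨Quotient.mk sg j, rfl⟩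
          | Sum.inr j =>
            refine ⟨Quotient.mk sg (π⁻¹ (ω₀ j)), ?_⟩
            apply Quotient.sound
            refine (MulAction.orbitRel_apply (G := Subgroup.zpowers F)).mpr ?_
            rw [mem_orbit_zpowers_iff]
            exact ⟨1, by rw [zpow_one, hF2]⟩
    · -- orbit cardinality
      intro i
      rw [horb i]
      have hOfin : (MulAction.orbit (Subgroup.zpowers g) i).Finite := Set.toFinite _
      set O := MulAction.orbit (Subgroup.zpowers g) i with hO
      have hdisj : Disjoint (Sum.inl '' O)
          (Sum.inr '' ((fun x => π (σ₀ x)) '' O) : Set (Fin n ⊕ Fin n)) := by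
        rw [Set.disjoint_iff_inter_eq_empty]
        ext y
        simp only [Set.mem_inter_iff, Set.mem_image, Set.mem_empty_iff_false, iff_false]
        rintro ⟨⟨a, _, rfl⟩, ⟨b, _, hb⟩⟩
        exact absurd hb (by simp)
      rw [Nat.card_coe_set_eq, Set.ncard_union_eq hdisj (hOfin.image _) ((hOfin.image _).image _),
        Set.ncard_image_of_injective _ Sum.inl_injective,
        Set.ncard_image_of_injective _ Sum.inr_injective,
        Set.ncard_image_of_injective _ (fun a b hab => σ₀.injective (π.injective hab)),
        Nat.card_coe_set_eq]
      ring
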